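/- arXiv:0911.0342 — 2 statements merged into one kernel-verified Lean document; each statement's English description precedes it below -/
import Mathlib

section
/- The set of unbroken doubly-singular 6-cores consists exactly of the ten partitions (2,2), (3,3), (2,2,2), (3,3,1), (3,2,2), (4,4), (3,3,2), (2,2,2,2), (3,3,3), (4,3,3,1). -/
/-- A partition: weakly decreasing sequence of non-negative integers (indexed from 1,
with the convention `μ 0 = 0`), with finitely many nonzero terms. -/
def IsPartition (μ : ℕ → ℕ) : Prop :=
  μ 0 = 0 ∧ (∀ i, 1 ≤ i → μ (i + 1) ≤ μ i) ∧ ∃ N, ∀ i, N ≤ i → μ i = 0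

/-- The conjugate partition: `conj μ j = |{i ≥ 1 : μ i ≥ j}|`. -/
noncomputable def conj (μ : ℕ → ℕ) (j : ℕ) : ℕ :=
  Nat.card {i : ℕ // 1 ≤ i ∧ j ≤ μ i}

/-- `(i,j)` is a node of the Young diagram of `μ`. -/
def IsNode (μ : ℕ → ℕ) (i j : ℕ) : Prop := 1 ≤ i ∧ 1 ≤ j ∧ j ≤ μ i

/-- The hook length `h_μ(i,j) = 1 + μ_i - j + μ'_j - i` (as an integer). -/
noncomputable def hook (μ : ℕ → ℕ) (i j : ℕ) : ℤ :=
  1 + (μ i : ℤ) - (j : ℤ) + (conj μ j : ℤ) - (i : ℤ)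

/-- `μ` is broken: there exist `1 < c < d` with `μ_{c-1} - μ_c > 1` and `μ_{d-1} = μ_d > 0`. -/
def Broken (μ : ℕ → ℕ) : Prop :=
  ∃ c d : ℕ, 1 < c ∧ c < d ∧ μ c + 1 < μ (c - 1) ∧ μ (d - 1) = μ d ∧ 0 < μ d

/-- `μ` is 2-singular: some `μ_i = μ_{i+1} > 0` (with `i ≥ 1`). -/
def TwoSingular (μ : ℕ → ℕ) : Prop := ∃ i : ℕ, 1 ≤ i ∧ μ i = μ (i + 1) ∧ 0 < μ i

/-- `μ` is an `e`-core: no hook length is divisible by `e`. -/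
def IsECore (e : ℕ) (μ : ℕ → ℕ) : Prop :=
  ∀ i j : ℕ, IsNode μ i j → ¬ (e : ℤ) ∣ hook μ i j

/-- `μ` is an `e`-JM partition. -/
def IsJM (e : ℕ) (μ : ℕ → ℕ) : Prop :=
  ∀ i j : ℕ, IsNode μ i j → (e : ℤ) ∣ hook μ i j →
    (∀ k, 1 ≤ k → k ≤ μ i → (e : ℤ) ∣ hook μ i k) ∨
    (∀ k, 1 ≤ k → k ≤ conj μ j → (e : ℤ) ∣ hook μ k j)

/-- The partition (indexed from 1, with `μ 0 = 0`) given by a list of parts. -/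
def ofList (L : List ℕ) (i : ℕ) : ℕ := if i = 0 then 0 else L.getD (i - 1) 0

/-!
Encode `μ` by its first-column hook lengths `B = {μ_i + μ'_1 - i}`. For a 6-core, `B` has no
multiple of 6 and is closed under `y ↦ y - 6` for `y > 6`. A repeated part of `μ` is a pair
`x, x + 1 ∈ B`, which can therefore be moved below 6; a repeated part of `μ'` means `1 ∉ B` or
two missing values just below some `y ∈ B` that is not the least element. Unbrokenness forbids
such a gap above a consecutive pair, and this leaves `B ⊆ {2, 3, 4, 5}` or `B ⊆ {1, 4, 5, 7}`.
So `μ` has at most four parts, each at most 7, and these finitely many partitions are checked by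
evaluation.
-/

open Finset

theorem conj_eq_card {f : ℕ → ℕ} {j : ℕ} {s : Finset ℕ} (h : ∀ i, 1 ≤ i ∧ j ≤ f i ↔ i ∈ s) :
    conj f j = #s := by
  have hset : {i | 1 ≤ i ∧ j ≤ f i} = (s : Set ℕ) := Set.ext h
  rw [← Set.ncard_coe_finset, ← hset, ← Nat.card_coe_set_eq]
  rfl

namespace IsPartition

variable {μ : ℕ → ℕ}

theorem antitone (hμ : IsPartition μ) {a b : ℕ} (ha : 1 ≤ a) (hab : a ≤ b) : μ b ≤ μ a := by
  induction b, hab using Nat.le_induction with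
  | base => exact le_rfl
  | succ n hn ih => exact (hμ.2.1 n (ha.trans hn)).trans ih

theorem le_iff_le_conj (hμ : IsPartition μ) {i j : ℕ} (hi : 1 ≤ i) (hj : 1 ≤ j) :
    j ≤ μ i ↔ i ≤ conj μ j := by
  obtain ⟨N, hN⟩ := hμ.2.2
  have hex : ∃ k, μ (k + 1) < j := ⟨N, by rw [hN _ (by omega)]; omega⟩
  -- the rows of length `≥ j` are `1, …, k`, where row `k + 1` is the first shorter one
  have hrow : ∀ i, 1 ≤ i ∧ j ≤ μ i ↔ i ∈ Icc 1 (Nat.find hex) := by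
    intro i
    rw [mem_Icc]
    refine and_congr_right fun hi => ⟨fun h => ?_, fun h => ?_⟩
    · by_contra hlt
      have := hμ.antitone (Nat.le_add_left 1 _) (show Nat.find hex + 1 ≤ i by omega)
      have := Nat.find_spec hex
      omega
    · have := Nat.find_min hex (show i - 1 < Nat.find hex by omega)
      rw [Nat.sub_add_cancel hi] at this
      omega
  have h := hrow i
  simp only [hi, true_and, mem_Icc] at h
  rwa [conj_eq_card hrow, Nat.card_Icc, Nat.add_sub_cancel]

theorem conj_antitone (hμ : IsPartition μ) {j j' : ℕ} (hj : 1 ≤ j) (hjj' : j ≤ j') :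
    conj μ j' ≤ conj μ j := by
  rcases Nat.eq_zero_or_pos (conj μ j') with h | h
  · omega
  · have := (hμ.le_iff_le_conj h (hj.trans hjj')).2 le_rfl
    exact (hμ.le_iff_le_conj h hj).1 (by omega)

theorem conj_lt_of_lt (hμ : IsPartition μ) {i j : ℕ} (hi : 1 ≤ i) (hij : μ i < j) :
    conj μ j < i := by
  by_contra h
  have := (hμ.le_iff_le_conj (j := j) hi (by omega)).2 (by omega)
  omega

theorem pos_of_le_conj_one (hμ : IsPartition μ) {i : ℕ} (hi : 1 ≤ i) (hit : i ≤ conj μ 1) :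
    0 < μ i :=
  (hμ.le_iff_le_conj hi le_rfl).2 hit

theorem eq_zero_of_conj_one_lt (hμ : IsPartition μ) {i : ℕ} (hit : conj μ 1 < i) : μ i = 0 := by
  by_contra h
  have := (hμ.le_iff_le_conj (i := i) (by omega) le_rfl).1 (by omega)
  omega

end IsPartition

/-- The first-column hook lengths `h_μ(i, 1) = μ_i + μ'_1 - i`, a β-set of `μ`. -/
noncomputable def betaSet (μ : ℕ → ℕ) : Finset ℕ :=
  (Icc 1 (conj μ 1)).image fun i => μ i + conj μ 1 - i

theorem mem_betaSet {μ : ℕ → ℕ} {y : ℕ} :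
    y ∈ betaSet μ ↔ ∃ i, 1 ≤ i ∧ i ≤ conj μ 1 ∧ μ i + conj μ 1 = y + i := by
  simp only [betaSet, mem_image, mem_Icc]
  constructor
  · rintro ⟨i, ⟨hi, hit⟩, rfl⟩
    exact ⟨i, hi, hit, by omega⟩
  · rintro ⟨i, hi, hit, he⟩
    exact ⟨i, ⟨hi, hit⟩, by omega⟩

namespace IsPartition

variable {μ : ℕ → ℕ}

theorem card_betaSet (hμ : IsPartition μ) : #(betaSet μ) = conj μ 1 := by
  rw [betaSet, card_image_of_injOn, Nat.card_Icc, Nat.add_sub_cancel]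
  intro a ha b hb hab
  simp only [coe_Icc, Set.mem_Icc] at ha hb
  rcases lt_trichotomy a b with h | h | h
  · have := hμ.antitone ha.1 h.le
    simp only at hab
    omega
  · exact h
  · have := hμ.antitone hb.1 h.le
    simp only at hab
    omega

theorem one_le_of_mem_betaSet (hμ : IsPartition μ) {y : ℕ} (hy : y ∈ betaSet μ) : 1 ≤ y := by
  obtain ⟨i, hi, hit, he⟩ := mem_betaSet.1 hy
  have := hμ.pos_of_le_conj_one hi hit
  omega

theorem mem_betaSet_or_exists_conj (hμ : IsPartition μ) (y : ℕ) :
    y ∈ betaSet μ ∨ ∃ j, 1 ≤ j ∧ y + 1 + conj μ j = j + conj μ 1 := by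
  induction y with
  | zero => exact Or.inr ⟨1, le_rfl, by omega⟩
  | succ y ih =>
    by_cases hy : y + 1 ∈ betaSet μ
    · exact Or.inl hy
    right
    rcases ih with hB | ⟨j, hj, hjy⟩
    · obtain ⟨i, hi, hit, he⟩ := mem_betaSet.1 hB
      have hlt : conj μ (μ i + 1) < i := hμ.conj_lt_of_lt hi (Nat.lt_succ_self _)
      have hge : i - 1 ≤ conj μ (μ i + 1) := by
        rcases Nat.lt_or_ge i 2 with h | h
        · omega
        rw [← hμ.le_iff_le_conj (by omega) (by omega)]
        by_contra hne
        have := hμ.antitone (show 1 ≤ i - 1 by omega) (Nat.sub_le i 1)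
        exact hy (mem_betaSet.2 ⟨i - 1, by omega, by omega, by omega⟩)
      exact ⟨μ i + 1, by omega, by omega⟩
    · have hdn := hμ.conj_antitone hj (Nat.le_add_right j 1)
      refine ⟨j + 1, by omega, ?_⟩
      rcases Nat.eq_zero_or_pos (conj μ j) with hc | hc
      · omega
      have hct := hμ.conj_antitone le_rfl hj
      have hjc : j ≤ μ (conj μ j) := (hμ.le_iff_le_conj hc hj).2 le_rfl
      have hup : j + 1 ≤ μ (conj μ j) := by
        by_contra h
        exact hy (mem_betaSet.2 ⟨conj μ j, hc, hct, by omega⟩)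
      have := (hμ.le_iff_le_conj hc (by omega)).1 hup
      omega

theorem exists_add_one_mem_betaSet_of_twoSingular (hμ : IsPartition μ) (h : TwoSingular μ) :
    ∃ x, x ∈ betaSet μ ∧ x + 1 ∈ betaSet μ := by
  obtain ⟨i, hi, heq, hpos⟩ := h
  have hit : i + 1 ≤ conj μ 1 := (hμ.le_iff_le_conj (by omega) le_rfl).1 (by omega)
  exact ⟨μ (i + 1) + conj μ 1 - (i + 1), mem_betaSet.2 ⟨i + 1, by omega, hit, by omega⟩,
    mem_betaSet.2 ⟨i, hi, by omega, by omega⟩⟩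

/-- A column `j` with `μ'_j = μ'_{j+1} > 0` ends at the row `c = μ'_j`, where `μ_c > j > μ_{c+1}`:
either `c` is the last row and `1 ∉ B`, or the two values just below `h(c, 1)` are missing from `B`.
-/
theorem one_not_mem_or_gap_of_twoSingular_conj (hμ : IsPartition μ) (h : TwoSingular (conj μ)) :
    1 ∉ betaSet μ ∨ ∃ y ∈ betaSet μ, ∃ z ∈ betaSet μ,
      z + 3 ≤ y ∧ y - 1 ∉ betaSet μ ∧ y - 2 ∉ betaSet μ := by
  obtain ⟨j, hj, heq, hc⟩ := h
  set c := conj μ j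
  have hct : c ≤ conj μ 1 := hμ.conj_antitone le_rfl hj
  have hup : j + 1 ≤ μ c := (hμ.le_iff_le_conj hc (by omega)).2 heq.le
  rcases hct.eq_or_lt with hlast | hlt
  · left
    intro h1
    obtain ⟨i, hi, hit, he⟩ := mem_betaSet.1 h1
    rw [hlast] at hup
    have := hμ.antitone hi hit
    omega
  · right
    have hdn : μ (c + 1) < j := by
      by_contra h
      have := (hμ.le_iff_le_conj (i := c + 1) (by omega) hj).1 (by omega)
      omega
    have hstep : ∀ w ∈ betaSet μ, w ≤ μ (c + 1) + conj μ 1 - (c + 1) ∨ μ c + conj μ 1 - c ≤ w := by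
      intro w hw
      obtain ⟨k, hk, hkt, hkw⟩ := mem_betaSet.1 hw
      rcases le_or_gt k c with hkc | hkc
      · have := hμ.antitone hk hkc
        omega
      · have := hμ.antitone (Nat.le_add_left 1 _) hkc
        omega
    refine ⟨μ c + conj μ 1 - c, mem_betaSet.2 ⟨c, hc, hct, by omega⟩,
      μ (c + 1) + conj μ 1 - (c + 1), mem_betaSet.2 ⟨c + 1, by omega, hlt, by omega⟩,
      by omega, fun hw => ?_, fun hw => ?_⟩ <;>
    · have := hstep _ hw
      omega

theorem broken_of_gap_above_pair (hμ : IsPartition μ) {x y : ℕ} (hx : x ∈ betaSet μ)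
    (hx1 : x + 1 ∈ betaSet μ) (hy : y ∈ betaSet μ) (hxy : x + 1 < y)
    (hy1 : y - 1 ∉ betaSet μ) (hy2 : y - 2 ∉ betaSet μ) : Broken μ := by
  obtain ⟨k, hk, hkt, hke⟩ := mem_betaSet.1 hx
  obtain ⟨j, hj, hjt, hje⟩ := mem_betaSet.1 hx1
  obtain ⟨i, hi, hit, hie⟩ := mem_betaSet.1 hy
  have hij : i < j := by
    by_contra h
    have := hμ.antitone hj (not_lt.1 h)
    omega
  have hjk : k = j + 1 := by
    have h1 : j < k := by
      by_contra h
      have := hμ.antitone hk (not_lt.1 h)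
      omega
    by_contra h
    have := hμ.antitone hj (Nat.le_add_right j 1)
    have := hμ.antitone (Nat.le_add_left 1 j) (show j + 1 ≤ k by omega)
    omega
  subst hjk
  have hnext : μ (i + 1) + conj μ 1 - (i + 1) ∈ betaSet μ :=
    mem_betaSet.2 ⟨i + 1, by omega, by omega, by omega⟩
  have := hμ.antitone hi (Nat.le_add_right i 1)
  have h1 : μ (i + 1) + conj μ 1 - (i + 1) ≠ y - 1 := fun h => hy1 (h ▸ hnext)
  have h2 : μ (i + 1) + conj μ 1 - (i + 1) ≠ y - 2 := fun h => hy2 (h ▸ hnext)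
  refine ⟨i + 1, j + 1, by omega, by omega, ?_, ?_, hμ.pos_of_le_conj_one (by omega) hkt⟩ <;>
  · simp only [Nat.add_sub_cancel]
    omega

theorem le_of_mem_betaSet_of_not_broken (hμ : IsPartition μ) (hnb : ¬ Broken μ) {x m : ℕ}
    (hx : x ∈ betaSet μ) (hx1 : x + 1 ∈ betaSet μ) (hxm : x + 1 ≤ m)
    (hgap : ∀ y ∈ betaSet μ, m < y → m + 3 ≤ y) {y : ℕ} (hy : y ∈ betaSet μ) : y ≤ m := by
  induction y using Nat.strong_induction_on with
  | _ y ih =>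
  by_contra hmy
  have := hgap y hy (by omega)
  refine hnb (hμ.broken_of_gap_above_pair hx hx1 hy (by omega) (fun h => ?_) (fun h => ?_))
  · have := ih _ (by omega) h
    omega
  · have := ih _ (by omega) h
    omega

theorem apply_one_le_of_forall_mem_betaSet_le (hμ : IsPartition μ) {m : ℕ}
    (h : ∀ y ∈ betaSet μ, y ≤ m) : μ 1 ≤ m := by
  rcases Nat.eq_zero_or_pos (conj μ 1) with h0 | hpos
  · rw [hμ.eq_zero_of_conj_one_lt (by omega)]
    exact Nat.zero_le m
  · have := h (μ 1 + conj μ 1 - 1) (mem_betaSet.2 ⟨1, le_rfl, hpos, by omega⟩)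
    omega

end IsPartition

namespace IsECore

variable {e : ℕ} {μ : ℕ → ℕ}

theorem not_dvd_of_mem_betaSet (h : IsECore e μ) (hμ : IsPartition μ) {y : ℕ}
    (hy : y ∈ betaSet μ) : ¬ e ∣ y := by
  obtain ⟨i, hi, hit, he⟩ := mem_betaSet.1 hy
  intro hdvd
  refine h i 1 ⟨hi, le_rfl, hμ.pos_of_le_conj_one hi hit⟩ ?_
  have : hook μ i 1 = y := by
    rw [hook]
    omega
  exact this ▸ Int.natCast_dvd_natCast.2 hdvd

/-- If `y - e ∉ B`, then `y - e = μ'_1 - 1 + j - μ'_j` and the node `(i, j)` of the row with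
`h(i, 1) = y` has hook length `e`. -/
theorem sub_mem_betaSet (h : IsECore e μ) (hμ : IsPartition μ) {y : ℕ} (hy : y ∈ betaSet μ)
    (hey : e < y) : y - e ∈ betaSet μ := by
  refine (hμ.mem_betaSet_or_exists_conj (y - e)).resolve_right fun ⟨j, hj, hje⟩ => ?_
  obtain ⟨i, hi, hit, hie⟩ := mem_betaSet.1 hy
  have hji : j ≤ μ i := by
    by_contra hlt
    have := hμ.conj_lt_of_lt hi (not_le.1 hlt)
    omega
  refine h i j ⟨hi, hj, hji⟩ ⟨1, ?_⟩
  rw [hook]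
  omega

theorem exists_add_one_mem_betaSet_lt (h : IsECore e μ) (hμ : IsPartition μ) (he : 0 < e)
    {x : ℕ} (hx : x ∈ betaSet μ) (hx1 : x + 1 ∈ betaSet μ) :
    ∃ r, r ∈ betaSet μ ∧ r + 1 ∈ betaSet μ ∧ r + 1 < e := by
  induction x using Nat.strong_induction_on with
  | _ x ih =>
  by_cases hxe : x + 1 < e
  · exact ⟨x, hx, hx1, hxe⟩
  have hne : x + 1 ≠ e := fun hxe => h.not_dvd_of_mem_betaSet hμ hx1 (hxe ▸ dvd_refl _)
  have hne' : x ≠ e := fun hxe => h.not_dvd_of_mem_betaSet hμ hx (hxe ▸ dvd_refl _)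
  have hx1' := h.sub_mem_betaSet hμ hx1 (by omega)
  rw [show x + 1 - e = x - e + 1 by omega] at hx1'
  exact ih (x - e) (by omega) (h.sub_mem_betaSet hμ hx (by omega)) hx1'

end IsECore

namespace IsPartition

variable {μ : ℕ → ℕ}

/-- Some consecutive pair of `B` lies below 6. If `1 ∉ B` then also `7 ∉ B`, so nothing in `B`
exceeds 5. Otherwise unbrokenness puts the gap of `μ'` right below that pair, which forces
`1, 4, 5 ∈ B` and `2, 3 ∉ B`, hence `8, 9 ∉ B`. -/
theorem betaSet_subset_of_sixCore (hμ : IsPartition μ) (hs : TwoSingular μ)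
    (hcs : TwoSingular (conj μ)) (hnb : ¬ Broken μ) (hcore : IsECore 6 μ) :
    betaSet μ ⊆ {2, 3, 4, 5} ∨ betaSet μ ⊆ {1, 4, 5, 7} := by
  obtain ⟨x₀, hx₀, hx₀1⟩ := hμ.exists_add_one_mem_betaSet_of_twoSingular hs
  obtain ⟨x, hx, hx1, hx6⟩ := hcore.exists_add_one_mem_betaSet_lt hμ (by norm_num) hx₀ hx₀1
  have hsix : ∀ y ∈ betaSet μ, y ≠ 6 := fun y hy h =>
    hcore.not_dvd_of_mem_betaSet hμ hy (h ▸ dvd_rfl)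
  rcases hμ.one_not_mem_or_gap_of_twoSingular_conj hcs with h1 | ⟨y, hy, z, hz, hzy, hy1, hy2⟩
  · left
    have hgap : ∀ y ∈ betaSet μ, 5 < y → 5 + 3 ≤ y := fun y hy h5 => by
      have h7 : y ≠ 7 := by
        rintro rfl
        exact h1 (hcore.sub_mem_betaSet hμ hy (by norm_num))
      have := hsix y hy
      omega
    intro w hw
    have := hμ.le_of_mem_betaSet_of_not_broken hnb hx hx1 (by omega) hgap hw
    have := hμ.one_le_of_mem_betaSet hw
    have : w ≠ 1 := fun h => h1 (h ▸ hw)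
    simp only [mem_insert, mem_singleton]
    omega
  · right
    have hyx : y ≤ x := by
      by_contra hxy
      have : y ≠ x + 1 := fun h => hy1 (by rwa [h, Nat.add_sub_cancel])
      exact hnb (hμ.broken_of_gap_above_pair hx hx1 hy (by omega) hy1 hy2)
    have := hμ.one_le_of_mem_betaSet hz
    obtain ⟨rfl, rfl, rfl⟩ : x = 4 ∧ y = 4 ∧ z = 1 := by omega
    have h2 : 2 ∉ betaSet μ := hy2
    have h3 : 3 ∉ betaSet μ := hy1
    have hgap : ∀ y ∈ betaSet μ, 7 < y → 7 + 3 ≤ y := fun y hy h7 => by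
      have h8 : y ≠ 8 := by
        rintro rfl
        exact h2 (hcore.sub_mem_betaSet hμ hy (by norm_num))
      have h9 : y ≠ 9 := by
        rintro rfl
        exact h3 (hcore.sub_mem_betaSet hμ hy (by norm_num))
      omega
    intro w hw
    have := hμ.le_of_mem_betaSet_of_not_broken hnb hx hx1 (by omega) hgap hw
    have := hμ.one_le_of_mem_betaSet hw
    have := hsix w hw
    have : w ≠ 2 := fun h => h2 (h ▸ hw)
    have : w ≠ 3 := fun h => h3 (h ▸ hw)
    simp only [mem_insert, mem_singleton]
    omega

theorem eq_zero_five_and_le_seven_of_sixCore (hμ : IsPartition μ) (hs : TwoSingular μ)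
    (hcs : TwoSingular (conj μ)) (hnb : ¬ Broken μ) (hcore : IsECore 6 μ) :
    μ 5 = 0 ∧ μ 1 ≤ 7 := by
  obtain ⟨S, hS, hcard, hle⟩ : ∃ S : Finset ℕ, betaSet μ ⊆ S ∧ #S = 4 ∧ ∀ y ∈ S, y ≤ 7 := by
    rcases hμ.betaSet_subset_of_sixCore hs hcs hnb hcore with h | h
    · exact ⟨_, h, rfl, by decide⟩
    · exact ⟨_, h, rfl, by decide⟩
  have ht : conj μ 1 ≤ 4 := hμ.card_betaSet ▸ hcard ▸ card_le_card hS
  exact ⟨hμ.eq_zero_of_conj_one_lt (by omega),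
    hμ.apply_one_le_of_forall_mem_betaSet_le fun y hy => hle y (hS hy)⟩

end IsPartition

section FiniteSupport

variable {f g : ℕ → ℕ} {n : ℕ}

theorem eq_iff_of_eq_zero (hf : ∀ i, n < i → f i = 0) (hg : ∀ i, n < i → g i = 0) :
    f = g ↔ ∀ i ≤ n, f i = g i := by
  refine ⟨fun h i _ => h ▸ rfl, fun h => funext fun i => ?_⟩
  by_cases hi : i ≤ n
  · exact h i hi
  · rw [hf i (by omega), hg i (by omega)]

theorem conj_eq_card_filter (hf : ∀ i, n < i → f i = 0) {j : ℕ} (hj : 1 ≤ j) :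
    conj f j = #{i ∈ Icc 1 n | j ≤ f i} := by
  refine conj_eq_card fun i => ?_
  simp only [mem_filter, mem_Icc]
  refine ⟨fun ⟨hi, hji⟩ => ⟨⟨hi, ?_⟩, hji⟩, fun ⟨⟨hi, _⟩, hji⟩ => ⟨hi, hji⟩⟩
  by_contra h
  rw [hf i (by omega)] at hji
  omega

theorem twoSingular_iff_of_eq_zero (hf : ∀ i, n < i → f i = 0) :
    TwoSingular f ↔ ∃ i ≤ n, 1 ≤ i ∧ f i = f (i + 1) ∧ 0 < f i := by
  refine ⟨fun ⟨i, hi⟩ => ⟨i, ?_, hi⟩, fun ⟨i, _, hi⟩ => ⟨i, hi⟩⟩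
  by_contra h
  have := hf i (by omega)
  omega

theorem broken_iff_of_eq_zero (hf : ∀ i, n < i → f i = 0) :
    Broken f ↔ ∃ c ≤ n, ∃ d ≤ n,
      1 < c ∧ c < d ∧ f c + 1 < f (c - 1) ∧ f (d - 1) = f d ∧ 0 < f d := by
  refine ⟨fun ⟨c, d, h⟩ => ⟨c, ?_, d, ?_, h⟩, fun ⟨c, _, d, _, h⟩ => ⟨c, d, h⟩⟩ <;>
  · by_contra hn
    have := hf d (by omega)
    omega

theorem isECore_iff_of_eq_zero {e : ℕ} (hf : ∀ i, n < i → f i = 0) :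
    IsECore e f ↔ ∀ i ≤ n, ∀ j ≤ f i, 1 ≤ i → 1 ≤ j →
      ¬ (e : ℤ) ∣ 1 + f i - j + #{k ∈ Icc 1 n | j ≤ f k} - i := by
  constructor
  · intro h i _ j hj hi1 hj1
    rw [← conj_eq_card_filter hf hj1]
    exact h i j ⟨hi1, hj1, hj⟩
  · intro h i j ⟨hi1, hj1, hj⟩
    have hi : i ≤ n := by
      by_contra hn
      have := hf i (by omega)
      omega
    rw [hook, conj_eq_card_filter hf hj1]
    exact h i hi j hj hi1 hj1

theorem twoSingular_conj_iff_of_eq_zero {m : ℕ} (hf : ∀ i, n < i → f i = 0)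
    (hm : ∀ i, f i ≤ m) :
    TwoSingular (conj f) ↔ ∃ j ≤ m, 1 ≤ j ∧
      #{i ∈ Icc 1 n | j ≤ f i} = #{i ∈ Icc 1 n | j + 1 ≤ f i} ∧ 0 < #{i ∈ Icc 1 n | j ≤ f i} := by
  have hconj : ∀ j, m < j → conj f j = 0 := fun j hj => by
    rw [conj_eq_card_filter hf (by omega), card_eq_zero, filter_eq_empty_iff]
    exact fun i _ => by have := hm i; omega
  rw [twoSingular_iff_of_eq_zero hconj]
  refine exists_congr fun j => and_congr_right fun _ => and_congr_right fun hj => ?_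
  rw [conj_eq_card_filter hf hj, conj_eq_card_filter hf (by omega)]

end FiniteSupport

theorem IsPartition.eq_ofList_map_range {μ : ℕ → ℕ} (hμ : IsPartition μ) {n : ℕ}
    (hn : μ (n + 1) = 0) :
    μ = ofList ((List.range n).map fun i => μ (i + 1)) := by
  funext i
  rw [ofList]
  split_ifs with hi
  · rw [hi, hμ.1]
  by_cases hin : i ≤ n
  · simp [List.getD_eq_getElem?_getD, show i - 1 < n by omega,
      Nat.sub_add_cancel (by omega : 1 ≤ i)]
  · rw [List.getD_eq_default _ _ (by simp only [List.length_map, List.length_range]; omega)]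
    have := hμ.antitone (Nat.le_add_left 1 n) (show n + 1 ≤ i by omega)
    omega

theorem ofList_eq_zero (L : List ℕ) {i : ℕ} (hi : L.length < i) : ofList L i = 0 := by
  rw [ofList, if_neg (by omega), List.getD_eq_default _ _ (by omega)]

theorem ofList_le_sum (L : List ℕ) (i : ℕ) : ofList L i ≤ L.sum := by
  unfold ofList
  split_ifs
  · exact Nat.zero_le _
  · rw [List.getD_eq_getElem?_getD]
    cases h : L[i - 1]? with
    | none => exact Nat.zero_le _
    | some x => exact List.le_sum_of_mem (List.mem_of_getElem? h)

instance (L L' : List ℕ) : Decidable (ofList L = ofList L') :=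
  decidable_of_iff _ (eq_iff_of_eq_zero (n := L.length + L'.length)
    (fun _ hi => ofList_eq_zero L (by omega)) (fun _ hi => ofList_eq_zero L' (by omega))).symm

instance (L : List ℕ) : Decidable (TwoSingular (ofList L)) :=
  decidable_of_iff _ (twoSingular_iff_of_eq_zero (fun _ => ofList_eq_zero L)).symm

instance (L : List ℕ) : Decidable (TwoSingular (conj (ofList L))) :=
  decidable_of_iff _
    (twoSingular_conj_iff_of_eq_zero (fun _ => ofList_eq_zero L) (ofList_le_sum L)).symm

instance (L : List ℕ) : Decidable (Broken (ofList L)) :=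
  decidable_of_iff _ (broken_iff_of_eq_zero (fun _ => ofList_eq_zero L)).symm

instance (e : ℕ) (L : List ℕ) : Decidable (IsECore e (ofList L)) :=
  decidable_of_iff _ (isECore_iff_of_eq_zero (fun _ => ofList_eq_zero L)).symm

set_option synthInstance.maxSize 2000 in
set_option synthInstance.maxHeartbeats 400000 in
theorem classification_ofList :
    ∀ a ≤ 7, ∀ b ≤ a, ∀ c ≤ b, ∀ d ≤ c,
      (TwoSingular (ofList [a, b, c, d]) ∧ TwoSingular (conj (ofList [a, b, c, d])) ∧
        ¬ Broken (ofList [a, b, c, d]) ∧ IsECore 6 (ofList [a, b, c, d])) ↔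
      (ofList [a, b, c, d] = ofList [2, 2] ∨ ofList [a, b, c, d] = ofList [3, 3] ∨
        ofList [a, b, c, d] = ofList [2, 2, 2] ∨ ofList [a, b, c, d] = ofList [3, 3, 1] ∨
        ofList [a, b, c, d] = ofList [3, 2, 2] ∨ ofList [a, b, c, d] = ofList [4, 4] ∨
        ofList [a, b, c, d] = ofList [3, 3, 2] ∨ ofList [a, b, c, d] = ofList [2, 2, 2, 2] ∨
        ofList [a, b, c, d] = ofList [3, 3, 3] ∨ ofList [a, b, c, d] = ofList [4, 3, 3, 1]) := by
  decide

/-- The unbroken doubly-singular 6-cores are exactly the ten listed partitions. -/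
theorem six_core_classification (μ : ℕ → ℕ) (hμ : IsPartition μ) :
    (TwoSingular μ ∧ TwoSingular (conj μ) ∧ ¬ Broken μ ∧ IsECore 6 μ) ↔
      μ ∈ ({ofList [2, 2], ofList [3, 3], ofList [2, 2, 2], ofList [3, 3, 1],
            ofList [3, 2, 2], ofList [4, 4], ofList [3, 3, 2], ofList [2, 2, 2, 2],
            ofList [3, 3, 3], ofList [4, 3, 3, 1]} : Set (ℕ → ℕ)) := by
  simp only [Set.mem_insert_iff, Set.mem_singleton_iff]
  by_cases hbox : μ 5 = 0 ∧ μ 1 ≤ 7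
  · rw [hμ.eq_ofList_map_range (n := 4) hbox.1]
    exact classification_ofList _ hbox.2 _ (hμ.antitone le_rfl (by norm_num))
      _ (hμ.antitone (by norm_num) (by norm_num)) _ (hμ.antitone (by norm_num) (by norm_num))
  · refine iff_of_false (fun ⟨hs, hcs, hnb, hcore⟩ =>
      hbox (hμ.eq_zero_five_and_le_seven_of_sixCore hs hcs hnb hcore)) ?_
    rintro (rfl | rfl | rfl | rfl | rfl | rfl | rfl | rfl | rfl | rfl) <;> exact hbox (by decide)
end

section
/- Let λ be an unbroken doubly-singular partition, let a be maximal with λ_{a-1} = λ_a > 0 and b maximal with λ'_{b-1} = λ'_b > 0. Then a ≤ λ'_b. -/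
/-!
Put `c = λ'_b`. Since `λ'_{b-1} = λ'_b`, no row of `λ` has length exactly `b - 1`, so
`λ_c ≥ b > b - 1 > λ_{c+1}`: rows `c` and `c + 1` differ by at least two. Unbrokenness forbids a
repeated row below such a gap, and the gap itself rules out `λ_c = λ_{c+1}`; hence `a ≤ c`.
-/

namespace IsPartition

variable {μ : ℕ → ℕ}

theorem antitoneOn (hμ : IsPartition μ) : AntitoneOn μ (Set.Ici 1) :=
  antitoneOn_nat_Ici_of_succ_le hμ.2.1

theorem finite_setOf_le (hμ : IsPartition μ) {j : ℕ} (hj : 1 ≤ j) :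
    {i | 1 ≤ i ∧ j ≤ μ i}.Finite := by
  obtain ⟨N, hN⟩ := hμ.2.2
  refine (Set.finite_Iio N).subset fun i hi => ?_
  by_contra hiN
  have := hN i (not_lt.mp hiN)
  exact absurd hi.2 (by omega)

theorem le_conj_iff (hμ : IsPartition μ) {i j : ℕ} (hi : 1 ≤ i) (hj : 1 ≤ j) :
    i ≤ conj μ j ↔ j ≤ μ i := by
  change i ≤ Set.ncard {k | 1 ≤ k ∧ j ≤ μ k} ↔ _
  constructor
  · intro h
    by_contra! hlt
    have hsub : {k | 1 ≤ k ∧ j ≤ μ k} ⊆ Set.Ico 1 i := fun x hx => by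
      refine ⟨hx.1, not_le.mp fun hix => ?_⟩
      have := hμ.antitoneOn (Set.mem_Ici.mpr hi) (Set.mem_Ici.mpr hx.1) hix
      exact absurd hx.2 (by omega)
    have hcard := Set.ncard_le_ncard hsub (Set.finite_Ico 1 i)
    rw [Set.ncard_Ico_nat] at hcard
    omega
  · intro h
    have hsub : Set.Icc 1 i ⊆ {k | 1 ≤ k ∧ j ≤ μ k} := fun x hx =>
      ⟨hx.1, h.trans (hμ.antitoneOn (Set.mem_Ici.mpr hx.1) (Set.mem_Ici.mpr hi) hx.2)⟩
    have hcard := Set.ncard_le_ncard hsub (hμ.finite_setOf_le hj)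
    rw [Set.ncard_Icc_nat] at hcard
    omega

theorem gap_of_conj_sub_one_eq (hμ : IsPartition μ) {b : ℕ} (hb : 2 ≤ b)
    (hrep : conj μ (b - 1) = conj μ b) (hpos : 0 < conj μ b) :
    μ (conj μ b + 1) + 1 < μ (conj μ b) := by
  have hrow : b ≤ μ (conj μ b) := (hμ.le_conj_iff hpos (by omega)).mp le_rfl
  have hnext : ¬ b - 1 ≤ μ (conj μ b + 1) := fun h => by
    have := (hμ.le_conj_iff (by omega) (by omega)).mpr h
    omega
  omega

end IsPartition

theorem lt_of_gap_of_not_broken {μ : ℕ → ℕ} (hub : ¬ Broken μ) {a c : ℕ} (hc : 1 < c)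
    (hgap : μ c + 1 < μ (c - 1)) (hrep : μ (a - 1) = μ a) (hpos : 0 < μ a) : a < c := by
  rcases lt_trichotomy a c with hac | rfl | hca
  · exact hac
  · omega
  · exact absurd ⟨c, a, hc, hca, hgap, hrep, hpos⟩ hub

theorem a_le_conj_b_general (μ : ℕ → ℕ) (a b : ℕ) (hμ : IsPartition μ)
    (hub : ¬ Broken μ)
    (harep : μ (a - 1) = μ a ∧ 0 < μ a)
    (hb2 : 2 ≤ b) (hbrep : conj μ (b - 1) = conj μ b ∧ 0 < conj μ b) :
    a ≤ conj μ b := by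
  have hgap := hμ.gap_of_conj_sub_one_eq hb2 hbrep.1 hbrep.2
  exact Nat.lt_succ_iff.mp <| lt_of_gap_of_not_broken hub (c := conj μ b + 1) (by omega)
    (by simpa using hgap) harep.1 harep.2

/-- For an unbroken doubly-singular partition, if `a` is maximal with `μ_{a-1} = μ_a > 0`
and `b` is maximal with `μ'_{b-1} = μ'_b > 0`, then `a ≤ μ'_b`. -/
theorem a_le_conj_b (μ : ℕ → ℕ) (a b : ℕ) (hμ : IsPartition μ)
    (hub : ¬ Broken μ) (h1 : TwoSingular μ) (h2 : TwoSingular (conj μ))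
    (ha2 : 2 ≤ a) (harep : μ (a - 1) = μ a ∧ 0 < μ a)
    (hamax : ∀ i, a < i → ¬ (μ (i - 1) = μ i ∧ 0 < μ i))
    (hb2 : 2 ≤ b) (hbrep : conj μ (b - 1) = conj μ b ∧ 0 < conj μ b)
    (hbmax : ∀ i, b < i → ¬ (conj μ (i - 1) = conj μ i ∧ 0 < conj μ i)) :
    a ≤ conj μ b :=
  a_le_conj_b_general μ a b hμ hub harep hb2 hbrep
end
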